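/- Let Poset_mono be the category of finite posets and injective order-preserving maps, let Ω_n be the n-element linear order, and let 𝔓 assign to each span L ←g— Ω_n —h→ R of injective monotone maps the pushout of that span computed in the category of posets and all monotone maps, together with its two (necessarily injective) structure maps. Then (Poset_mono, Ω, 𝔓) is a spined category, and it admits no S-functor: there is no spinal functor from it to Nat. -/

import Mathlib

open CategoryTheory

universe u v

/-- The data of a spine and proxy pushout operation on a category. -/
structure SpineData (C : Type u) [Category.{v} C] where
  /-- the spine, a functor from the discrete category ℕ -/
  Ω : ℕ → C
  /-- proxy pushout object of a span out of a spine object -/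
  P : ∀ {n : ℕ} {G H : C}, (Ω n ⟶ G) → (Ω n ⟶ H) → C
  /-- left structure morphism of the proxy pushout cocone -/
  inl : ∀ {n : ℕ} {G H : C} (g : Ω n ⟶ G) (h : Ω n ⟶ H), G ⟶ P g h
  /-- right structure morphism of the proxy pushout cocone -/
  inr : ∀ {n : ℕ} {G H : C} (g : Ω n ⟶ G) (h : Ω n ⟶ H), H ⟶ P g h

variable {C : Type u} [Category.{v} C]

/-- (SC1): every object admits a morphism to some spine object. -/
def SpineData.SC1 (D : SpineData C) : Prop :=
  ∀ X : C, ∃ n : ℕ, Nonempty (X ⟶ D.Ω n)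

/-- (SC2): unique compatibility morphisms between proxy pushouts of extended spans. -/
def SpineData.SC2 (D : SpineData C) : Prop :=
  ∀ {n : ℕ} {G H G' H' : C} (g : D.Ω n ⟶ G) (h : D.Ω n ⟶ H) (g' : G ⟶ G') (h' : H ⟶ H'),
    ∃! m : D.P g h ⟶ D.P (g ≫ g') (h ≫ h'),
      D.inl g h ≫ m = g' ≫ D.inl (g ≫ g') (h ≫ h') ∧
      D.inr g h ≫ m = h' ≫ D.inr (g ≫ g') (h ≫ h')

/-- A spined category is a category equipped with spine data satisfying SC1 and SC2. -/
def SpineData.IsSpined (D : SpineData C) : Prop := D.SC1 ∧ D.SC2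

/-- An S-functor over a spined category `(C, Ω, 𝔓)`: a spinal functor to the spined
category `Nat` (the poset `(ℕ, ≤)` with spine `n ↦ n` and proxy pushouts given by maxima).
Equivalently: a monotone map preserving the spine and proxy pushouts. -/
structure SFunctor (D : SpineData C) where
  val : C → ℕ
  mono : ∀ {X Y : C}, (X ⟶ Y) → val X ≤ val Y
  spine : ∀ n : ℕ, val (D.Ω n) = n
  pp : ∀ {n : ℕ} {G H : C} (g : D.Ω n ⟶ G) (h : D.Ω n ⟶ H),
    val (D.P g h) = max (val G) (val H)

/-- An object is pseudo-chordal if all S-functors agree on it. -/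
def PseudoChordal (D : SpineData C) (X : C) : Prop :=
  ∀ F G : SFunctor D, F.val X = G.val X

/-- The chordal objects: the smallest collection of objects containing the spine and
closed under proxy pushouts. -/
inductive Chordal (D : SpineData C) : C → Prop
  | spine (n : ℕ) : Chordal D (D.Ω n)
  | push {n : ℕ} {A B : C} (a : D.Ω n ⟶ A) (b : D.Ω n ⟶ B) :
      Chordal D A → Chordal D B → Chordal D (D.P a b)

/-- The set of widths of pseudo-chordal completions of `X`: `k` is such a width
iff there is a morphism `X ⟶ H` with `H` pseudo-chordal and every S-functor takes
the value `k` on `H`. -/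
def pcWidths (D : SpineData C) (X : C) : Set ℕ :=
  {k | ∃ H : C, Nonempty (X ⟶ H) ∧ PseudoChordal D H ∧ ∀ F : SFunctor D, F.val H = k}

/-- The set of widths of chordal completions of `X`. -/
def chWidths (D : SpineData C) (X : C) : Set ℕ :=
  {k | ∃ H : C, Nonempty (X ⟶ H) ∧ Chordal D H ∧ ∀ F : SFunctor D, F.val H = k}

/-- The triangulation number: minimum width of a pseudo-chordal completion. -/
noncomputable def tri (D : SpineData C) (X : C) : ℕ := sInf (pcWidths D X)

/-- The chordal triangulation number: minimum width of a chordal completion. -/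
noncomputable def triCh (D : SpineData C) (X : C) : ℕ := sInf (chWidths D X)

/-- The order of an object: least `n` admitting a morphism `X ⟶ Ω n`. -/
noncomputable def ordOf (D : SpineData C) (X : C) : ℕ := sInf {n : ℕ | Nonempty (X ⟶ D.Ω n)}

/-- A finite poset. -/
structure FinPoset : Type 1 where
  V : Type
  [fin : Finite V]
  [ord : PartialOrder V]

attribute [instance] FinPoset.fin FinPoset.ord

/-- `Poset_mono`: the category of finite posets and injective order-preserving maps. -/
instance : Category.{0, 1} FinPoset where
  Hom A B := {f : A.V → B.V // Function.Injective f ∧ Monotone f}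
  id A := ⟨id, fun _ _ e => e, monotone_id⟩
  comp f g := ⟨g.1 ∘ f.1, fun _ _ e => f.2.1 (g.2.1 e), g.2.2.comp f.2.2⟩

/-- The `n`-element linear order, as a finite poset. -/
def linOrd (n : ℕ) : FinPoset := ⟨Fin n⟩


/-!
A pushout of finite posets along a chain `Ω_n` is glued without extra identifications: testing
its universal property against monotone maps into `Prop` (i.e. against upper sets) shows that
`inl l = inr r` only when `l` and `r` are images of one point of `Ω_n`, and testing it against
the subposet on the image of the cocone shows that the cocone is jointly surjective. Together
these make the comparison maps of (SC2) injective; (SC1) is a linear extension.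

There is no S-functor because gluing the top of one copy of `Ω_2` to the bottom of another
produces a chain of length `3`, so an S-functor `F` would satisfy `3 = F Ω_3 ≤ max 2 2`.
-/

lemma Monotone.le_of_map_le {α β : Type*} [Preorder α] [PartialOrder β] {f : α → β}
    (hf : Monotone f) (hinj : Function.Injective f) (htot : ∀ x y : α, x ≤ y ∨ y ≤ x)
    {x y : α} (hxy : f x ≤ f y) : x ≤ y := by
  rcases htot x y with h | h
  · exact h
  · exact (hinj (le_antisymm hxy (hf h))).le

lemma SFunctor.le_max_of_hom {D : SpineData C} (F : SFunctor D) {n a b k : ℕ}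
    (g : D.Ω n ⟶ D.Ω a) (h : D.Ω n ⟶ D.Ω b) (t : D.Ω k ⟶ D.P g h) : k ≤ max a b := by
  simpa only [F.spine, F.pp] using F.mono t

namespace FinPoset

lemma linOrd_le_total (n : ℕ) (x y : (linOrd n).V) : x ≤ y ∨ y ≤ x :=
  le_total (α := Fin n) x y

lemma exists_hom_linOrd (X : FinPoset) : ∃ n, Nonempty (X ⟶ linOrd n) := by
  let : Fintype X.V := Fintype.ofFinite _
  let : Fintype (LinearExtension X.V) := inferInstanceAs (Fintype X.V)
  let e := (monoEquivOfFin (LinearExtension X.V) rfl).symm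
  exact ⟨_, ⟨fun x => e (toLinearExtension x), fun _ _ hab => e.injective hab,
    e.monotone.comp toLinearExtension.monotone⟩⟩

def linOrdPoint {n : ℕ} (k : Fin n) : linOrd 1 ⟶ linOrd n :=
  ⟨fun _ => k, fun x y _ => Subsingleton.elim (α := Fin 1) x y, monotone_const⟩

lemma nonempty_linOrd_three_hom {P : FinPoset} {i j : linOrd 2 ⟶ P}
    (hij : i.1 ∘ (linOrdPoint 1).1 = j.1 ∘ (linOrdPoint 0).1) : Nonempty (linOrd 3 ⟶ P) := by
  have hi := i.2.2.strictMono_of_injective i.2.1 (show (0 : Fin 2) < 1 by decide)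
  have hj := j.2.2.strictMono_of_injective j.2.1 (show (0 : Fin 2) < 1 by decide)
  have hglue : i.1 (1 : Fin 2) = j.1 (0 : Fin 2) := congrFun hij (0 : Fin 1)
  have hf : StrictMono ![i.1 (0 : Fin 2), i.1 (1 : Fin 2), j.1 (1 : Fin 2)] := by
    rw [Fin.strictMono_iff_lt_succ]
    intro k
    fin_cases k
    · exact hi
    · exact hglue ▸ hj
  exact ⟨⟨_, hf.injective, hf.monotone⟩⟩

def IsMonotonePushout {A L R P : FinPoset} (g : A ⟶ L) (h : A ⟶ R) (i : L ⟶ P) (j : R ⟶ P) :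
    Prop :=
  i.1 ∘ g.1 = j.1 ∘ h.1 ∧
    ∀ (Z : FinPoset) (z₁ : L.V → Z.V) (z₂ : R.V → Z.V), Monotone z₁ → Monotone z₂ →
      z₁ ∘ g.1 = z₂ ∘ h.1 → ∃! m : P.V → Z.V, Monotone m ∧ m ∘ i.1 = z₁ ∧ m ∘ j.1 = z₂

namespace IsMonotonePushout

variable {A L R P : FinPoset} {g : A ⟶ L} {h : A ⟶ R} {i : L ⟶ P} {j : R ⟶ P}

lemma symm (hP : IsMonotonePushout g h i j) : IsMonotonePushout h g j i :=
  ⟨hP.1.symm, fun Z z₁ z₂ hz₁ hz₂ hz => by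
    simpa only [and_comm (a := _ ∘ j.1 = z₁)] using hP.2 Z z₂ z₁ hz₂ hz₁ hz.symm⟩

lemma hom_ext (hP : IsMonotonePushout g h i j) {Z : FinPoset} {m m' : P.V → Z.V}
    (hm : Monotone m) (hm' : Monotone m') (hi : m ∘ i.1 = m' ∘ i.1) (hj : m ∘ j.1 = m' ∘ j.1) :
    m = m' := by
  have hcomm : (m ∘ i.1) ∘ g.1 = (m ∘ j.1) ∘ h.1 := congrArg (m ∘ ·) hP.1
  exact (hP.2 Z _ _ (hm.comp i.2.2) (hm.comp j.2.2) hcomm).unique ⟨hm, rfl, rfl⟩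
    ⟨hm', hi.symm, hj.symm⟩

lemma jointly_surjective (hP : IsMonotonePushout g h i j) (p : P.V) :
    (∃ l, i.1 l = p) ∨ ∃ r, j.1 r = p := by
  let S : FinPoset := ⟨{q : P.V // q ∈ Set.range i.1 ∪ Set.range j.1}⟩
  obtain ⟨m, ⟨hm, hmi, hmj⟩, -⟩ := hP.2 S (fun l => ⟨i.1 l, .inl ⟨l, rfl⟩⟩)
    (fun r => ⟨j.1 r, .inr ⟨r, rfl⟩⟩) (fun _ _ hab => i.2.2 hab) (fun _ _ hab => j.2.2 hab)
    (funext fun x => Subtype.ext (congrFun hP.1 x))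
  have hret : (fun q => (m q).1) = id :=
    hP.hom_ext (fun _ _ hab => hm hab) monotone_id
      (funext fun l => congrArg Subtype.val (congrFun hmi l))
      (funext fun r => congrArg Subtype.val (congrFun hmj r))
  have hp : (m p).1 = p := congrFun hret p
  exact hp ▸ (m p).2

/-- Test against the cocone into `Prop` formed by the upper set of `l` and the upper set
generated by `h (g⁻¹ (Set.Ici l))`. -/
lemma exists_le_of_eq (hP : IsMonotonePushout g h i j) (htot : ∀ x y : A.V, x ≤ y ∨ y ≤ x)
    {l : L.V} {r : R.V} (hlr : i.1 l = j.1 r) : ∃ x, l ≤ g.1 x ∧ h.1 x ≤ r := by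
  have hcomm : (fun l' => l ≤ l') ∘ g.1 = (fun r' => ∃ x, l ≤ g.1 x ∧ h.1 x ≤ r') ∘ h.1 :=
    funext fun y => propext ⟨fun hy => ⟨y, hy, le_rfl⟩, fun ⟨x, hx, hxy⟩ =>
      hx.trans (g.2.2 (h.2.2.le_of_map_le h.2.1 htot hxy))⟩
  obtain ⟨m, ⟨-, hmi, hmj⟩, -⟩ := hP.2 ⟨Prop⟩ _ _ (fun _ _ hab hl => hl.trans hab)
    (fun _ _ hab ⟨x, hx, hxr⟩ => ⟨x, hx, hxr.trans hab⟩) hcomm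
  have hmlr : (l ≤ l) = ∃ x, l ≤ g.1 x ∧ h.1 x ≤ r := by
    rw [← congrFun hmi l, ← congrFun hmj r, Function.comp_apply, hlr]; rfl
  exact hmlr ▸ le_rfl

lemma exists_eq_of_eq (hP : IsMonotonePushout g h i j) (htot : ∀ x y : A.V, x ≤ y ∨ y ≤ x)
    {l : L.V} {r : R.V} (hlr : i.1 l = j.1 r) : ∃ x, g.1 x = l ∧ h.1 x = r := by
  obtain ⟨x, hlx, hxr⟩ := hP.exists_le_of_eq htot hlr
  obtain ⟨y, hry, hyl⟩ := hP.symm.exists_le_of_eq htot hlr.symm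
  have hyx : y ≤ x := g.2.2.le_of_map_le g.2.1 htot (hyl.trans hlx)
  have hxy : x ≤ y := h.2.2.le_of_map_le h.2.1 htot (hxr.trans hry)
  exact ⟨x, le_antisymm ((g.2.2 hxy).trans hyl) hlx, le_antisymm hxr (hry.trans (h.2.2 hyx))⟩

lemma existsUnique_hom (hP : IsMonotonePushout g h i j) (htot : ∀ x y : A.V, x ≤ y ∨ y ≤ x)
    {L' R' P' : FinPoset} (g' : L ⟶ L') (h' : R ⟶ R') {i' : L' ⟶ P'} {j' : R' ⟶ P'}
    (hP' : IsMonotonePushout (g ≫ g') (h ≫ h') i' j') :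
    ∃! m : P ⟶ P', i ≫ m = g' ≫ i' ∧ j ≫ m = h' ≫ j' := by
  obtain ⟨m, ⟨hm, hmi, hmj⟩, -⟩ :=
    hP.2 P' _ _ (i'.2.2.comp g'.2.2) (j'.2.2.comp h'.2.2) hP'.1
  have hmi' (l : L.V) : m (i.1 l) = i'.1 (g'.1 l) := congrFun hmi l
  have hmj' (r : R.V) : m (j.1 r) = j'.1 (h'.1 r) := congrFun hmj r
  have hglue {l : L.V} {r : R.V} (hlr : m (i.1 l) = m (j.1 r)) : i.1 l = j.1 r := by
    rw [hmi', hmj'] at hlr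
    obtain ⟨x, hxl, hxr⟩ := hP'.exists_eq_of_eq htot hlr
    rw [← g'.2.1 hxl, ← h'.2.1 hxr]
    exact congrFun hP.1 x
  have hinj : Function.Injective m := by
    intro p q hpq
    rcases hP.jointly_surjective p with ⟨l, rfl⟩ | ⟨r, rfl⟩ <;>
      rcases hP.jointly_surjective q with ⟨l', rfl⟩ | ⟨r', rfl⟩
    · rw [hmi', hmi'] at hpq
      rw [g'.2.1 (i'.2.1 hpq)]
    · exact hglue hpq
    · exact (hglue hpq.symm).symm
    · rw [hmj', hmj'] at hpq
      rw [h'.2.1 (j'.2.1 hpq)]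
  refine ⟨⟨m, hinj, hm⟩, ⟨Subtype.ext hmi, Subtype.ext hmj⟩, fun m' ⟨hm'i, hm'j⟩ => ?_⟩
  exact Subtype.ext (hP.hom_ext m'.2.2 hm ((congrArg Subtype.val hm'i).trans hmi.symm)
    ((congrArg Subtype.val hm'j).trans hmj.symm))

end IsMonotonePushout

end FinPoset

/-- let `Ω n` be the `n`-element linear order and let `𝔓` assign to each
span of injective monotone maps out of `Ω n` its pushout computed in the category of
posets and all monotone maps (i.e. its cocone satisfies the pushout universal property
among all monotone cocones).  Then `(Poset_mono, Ω, 𝔓)` is a spined category that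
admits no S-functor. -/
theorem posetMono_spined_but_no_SFunctor (D : SpineData FinPoset)
    (hΩ : ∀ n : ℕ, D.Ω n = linOrd n)
    (hpush : ∀ {n : ℕ} {L R : FinPoset} (g : D.Ω n ⟶ L) (h : D.Ω n ⟶ R),
      ((D.inl g h).1 ∘ g.1 = (D.inr g h).1 ∘ h.1) ∧
      ∀ (Z : FinPoset) (z₁ : L.V → Z.V) (z₂ : R.V → Z.V),
        Monotone z₁ → Monotone z₂ → z₁ ∘ g.1 = z₂ ∘ h.1 →
        ∃! m : (D.P g h).V → Z.V,
          Monotone m ∧ m ∘ (D.inl g h).1 = z₁ ∧ m ∘ (D.inr g h).1 = z₂) :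
    D.IsSpined ∧ IsEmpty (SFunctor D) := by
  obtain ⟨Ω, P, inl, inr⟩ := D
  obtain rfl : Ω = linOrd := funext hΩ
  have hP {n : ℕ} {L R : FinPoset} (g : linOrd n ⟶ L) (h : linOrd n ⟶ R) :
      FinPoset.IsMonotonePushout g h (inl g h) (inr g h) := hpush g h
  refine ⟨⟨FinPoset.exists_hom_linOrd, fun g h g' h' =>
    (hP g h).existsUnique_hom (FinPoset.linOrd_le_total _) g' h' (hP _ _)⟩, ⟨fun F => ?_⟩⟩
  obtain ⟨t⟩ := FinPoset.nonempty_linOrd_three_hom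
    (hP (FinPoset.linOrdPoint (1 : Fin 2)) (FinPoset.linOrdPoint 0)).1
  have h3 := F.le_max_of_hom (a := 2) (b := 2) _ _ t
  omega
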